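/- For real a, b with a + ν > −1 and b > −1, ν ≥ 0, and ω > 0: ∫₀¹ x^a (1−x)^b J_ν(ωx) dx = [Γ(b+1)Γ(a+ν+1) ω^ν / (2^ν Γ(ν+1) Γ(a+b+ν+2))] · ₂F₃((a+ν+1)/2, (a+ν+2)/2; ν+1, (a+b+ν+2)/2, (a+b+ν+3)/2; −ω²/4). -/

import Mathlib

/-! Expand `J_ν(ωx)` in its power series and integrate term by term. The `m`-th term is the Beta
integral `B(a + ν + 2m + 1, b + 1)`, and the duplication identity
`(s)_{2m} = 4^m (s/2)_m ((s+1)/2)_m` turns the resulting ratio of Gamma values into the Pochhammer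
coefficients of `₂F₃`. The interchange of sum and integral is legitimate because on `(0, 1]` the
`m`-th term is at most `(ω/2)^(2m+ν) / (m! Γ(ν+1))` times the integrable `x^(a+ν) (1-x)^b`. -/

open Real MeasureTheory intervalIntegral

/-- The Bessel function of the first kind of order `ν`, defined by its power
series `J_ν(x) = Σ_{m≥0} (−1)^m / (m! Γ(m+ν+1)) (x/2)^{2m+ν}`. -/
noncomputable def besselJ (ν : ℝ) (x : ℝ) : ℝ :=
  ∑' m : ℕ, (-1 : ℝ) ^ m / (m.factorial * Real.Gamma (m + ν + 1)) *
    (x / 2) ^ (2 * m + ν)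

/-- Shifted Chebyshev polynomial of the first kind on `[0,1]`:
`T*_k(x) = T_k(2x - 1)`. -/
noncomputable def Tstar (k : ℕ) (x : ℝ) : ℝ :=
  (Polynomial.Chebyshev.T ℝ k).eval (2 * x - 1)

/-- The Pochhammer symbol `(x)_m = x(x+1)⋯(x+m−1)`. -/
noncomputable def poch (x : ℝ) (m : ℕ) : ℝ := ∏ i ∈ Finset.range m, (x + i)

/-- The generalized hypergeometric function `₂F₃(μ₁,μ₂; ν₁,ν₂,ν₃; z)`. -/
noncomputable def hyp2F3 (μ₁ μ₂ ν₁ ν₂ ν₃ z : ℝ) : ℝ :=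
  ∑' m : ℕ, poch μ₁ m * poch μ₂ m /
    (poch ν₁ m * poch ν₂ m * poch ν₃ m * m.factorial) * z ^ m

lemma poch_succ (x : ℝ) (m : ℕ) : poch x (m + 1) = poch x m * (x + m) :=
  Finset.prod_range_succ _ _

lemma poch_pos {x : ℝ} (hx : 0 < x) (m : ℕ) : 0 < poch x m :=
  Finset.prod_pos fun _ _ => by positivity

lemma one_le_poch {x : ℝ} (hx : 1 ≤ x) (m : ℕ) : 1 ≤ poch x m :=
  Finset.one_le_prod fun i _ => by linarith [(Nat.cast_nonneg i : (0 : ℝ) ≤ i)]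

lemma poch_two_mul (s : ℝ) (m : ℕ) :
    poch s (2 * m) = 4 ^ m * poch (s / 2) m * poch ((s + 1) / 2) m := by
  induction m with
  | zero => simp [poch]
  | succ m ih =>
    rw [show 2 * (m + 1) = 2 * m + 1 + 1 by ring, poch_succ, poch_succ, poch_succ, poch_succ, ih]
    push_cast
    ring

lemma Gamma_add_nat {x : ℝ} (hx : 0 < x) (m : ℕ) : Gamma (x + m) = Gamma x * poch x m := by
  induction m with
  | zero => simp [poch]
  | succ m ih =>
    rw [Nat.cast_succ, ← add_assoc, Gamma_add_one (by positivity), ih, poch_succ]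
    ring

lemma Gamma_add_two_mul_nat {s : ℝ} (hs : 0 < s) (m : ℕ) :
    Gamma (s + 2 * m) = Gamma s * (4 ^ m * poch (s / 2) m * poch ((s + 1) / 2) m) := by
  rw [← poch_two_mul, ← Gamma_add_nat hs]
  push_cast
  rfl

lemma Gamma_le_Gamma_add_nat {x : ℝ} (hx : 1 ≤ x) (m : ℕ) : Gamma x ≤ Gamma (x + m) := by
  rw [Gamma_add_nat (by linarith)]
  exact le_mul_of_one_le_right (Gamma_pos_of_pos (by linarith)).le (one_le_poch hx m)

lemma ofReal_rpow_mul_one_sub_rpow {x : ℝ} (hx : x ∈ Set.Icc (0 : ℝ) 1) (p q : ℝ) :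
    ((x ^ p * (1 - x) ^ q : ℝ) : ℂ) = (x : ℂ) ^ (p : ℂ) * (1 - (x : ℂ)) ^ (q : ℂ) := by
  rw [Complex.ofReal_mul, Complex.ofReal_cpow hx.1, Complex.ofReal_cpow (sub_nonneg.2 hx.2),
    Complex.ofReal_sub, Complex.ofReal_one]

lemma betaIntegral_ofReal_add_one (p q : ℝ) :
    Complex.betaIntegral (p + 1 : ℝ) (q + 1 : ℝ) =
      ∫ x in (0 : ℝ)..1, ((x ^ p * (1 - x) ^ q : ℝ) : ℂ) := by
  refine integral_congr fun x hx => ?_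
  rw [Set.uIcc_of_le zero_le_one] at hx
  simp only [ofReal_rpow_mul_one_sub_rpow hx, Complex.ofReal_add, Complex.ofReal_one,
    add_sub_cancel_right]

lemma intervalIntegrable_rpow_mul_one_sub_rpow {p q : ℝ} (hp : -1 < p) (hq : -1 < q) :
    IntervalIntegrable (fun x : ℝ => x ^ p * (1 - x) ^ q) volume 0 1 := by
  have h := Complex.betaIntegral_convergent (u := (p + 1 : ℝ)) (v := (q + 1 : ℝ))
    (by simp; linarith) (by simp; linarith)
  have h' : IntervalIntegrable (fun x : ℝ => ((x ^ p * (1 - x) ^ q : ℝ) : ℂ)) volume 0 1 := by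
    refine h.congr fun x hx => ?_
    rw [Set.uIoc_of_le zero_le_one] at hx
    simp only [ofReal_rpow_mul_one_sub_rpow (Set.Ioc_subset_Icc_self hx), Complex.ofReal_add,
      Complex.ofReal_one, add_sub_cancel_right]
  simpa using intervalIntegrable_iff.2 (intervalIntegrable_iff.1 h').re

lemma integral_rpow_mul_one_sub_rpow {p q : ℝ} (hp : -1 < p) (hq : -1 < q) :
    ∫ x in (0 : ℝ)..1, x ^ p * (1 - x) ^ q = Gamma (p + 1) * Gamma (q + 1) / Gamma (p + q + 2) := by
  have h := Complex.betaIntegral_eq_Gamma_mul_div (p + 1 : ℝ) (q + 1 : ℝ)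
    (by simp; linarith) (by simp; linarith)
  rw [betaIntegral_ofReal_add_one, integral_ofReal, ← Complex.ofReal_add, Complex.Gamma_ofReal,
    Complex.Gamma_ofReal, Complex.Gamma_ofReal] at h
  rw [show p + 1 + (q + 1) = p + q + 2 by ring] at h
  exact_mod_cast h

lemma integral_tsum_mul_of_summable_abs {α : Type*} [MeasurableSpace α] {μ : Measure α}
    {κ : ℕ → ℝ} {f : ℕ → α → ℝ} {B : ℝ} (hκ : Summable fun m => |κ m|)
    (hf : ∀ m, Integrable (f m) μ) (hf_nonneg : ∀ m, 0 ≤ᵐ[μ] f m)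
    (hf_le : ∀ m, ∫ x, f m x ∂μ ≤ B) :
    ∫ x, ∑' m, κ m * f m x ∂μ = ∑' m, κ m * ∫ x, f m x ∂μ := by
  have hnorm (m : ℕ) : ∫ x, ‖κ m * f m x‖ ∂μ = |κ m| * ∫ x, f m x ∂μ := by
    rw [← MeasureTheory.integral_const_mul]
    refine integral_congr_ae ((hf_nonneg m).mono fun x hx => ?_)
    dsimp only
    rw [norm_mul, Real.norm_eq_abs, Real.norm_of_nonneg hx]
  simp_rw [← MeasureTheory.integral_const_mul]
  refine (integral_tsum_of_summable_integral_norm (fun m => (hf m).const_mul (κ m)) ?_).symm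
  refine (hκ.mul_right B).of_nonneg_of_le (fun m => integral_nonneg fun x => norm_nonneg _)
    fun m => ?_
  rw [hnorm]
  exact mul_le_mul_of_nonneg_left (hf_le m) (abs_nonneg _)

lemma integral_tsum_mul_rpow_mul_one_sub_rpow {κ : ℕ → ℝ} (hκ : Summable fun m => |κ m|)
    {p q : ℝ} (hp : -1 < p) (hq : -1 < q) :
    ∫ x in Set.Ioc (0 : ℝ) 1, ∑' m : ℕ, κ m * (x ^ (p + 2 * m) * (1 - x) ^ q) =
      ∑' m : ℕ, κ m * (Gamma (p + 2 * m + 1) * Gamma (q + 1) / Gamma (p + 2 * m + q + 2)) := by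
  have hpm (m : ℕ) : -1 < p + 2 * m := by linarith [m.cast_nonneg (α := ℝ)]
  have hf (m : ℕ) : IntegrableOn (fun x : ℝ => x ^ (p + 2 * m) * (1 - x) ^ q) (Set.Ioc 0 1) :=
    (intervalIntegrable_iff_integrableOn_Ioc_of_le zero_le_one).1
      (intervalIntegrable_rpow_mul_one_sub_rpow (hpm m) hq)
  have hf_nonneg (m : ℕ) :
      0 ≤ᵐ[volume.restrict (Set.Ioc 0 1)] fun x : ℝ => x ^ (p + 2 * m) * (1 - x) ^ q :=
    ae_restrict_of_forall_mem measurableSet_Ioc fun x hx =>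
      mul_nonneg (rpow_nonneg hx.1.le _) (rpow_nonneg (sub_nonneg.2 hx.2) _)
  have hf_le (m : ℕ) : ∫ x in Set.Ioc (0 : ℝ) 1, x ^ (p + 2 * m) * (1 - x) ^ q ≤
      ∫ x in Set.Ioc (0 : ℝ) 1, x ^ (p + 2 * (0 : ℕ)) * (1 - x) ^ q :=
    setIntegral_mono_on (hf m) (hf 0) measurableSet_Ioc fun x hx =>
      mul_le_mul_of_nonneg_right
        (rpow_le_rpow_of_exponent_ge hx.1 hx.2 (by push_cast; linarith [m.cast_nonneg (α := ℝ)]))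
        (rpow_nonneg (sub_nonneg.2 hx.2) _)
  rw [integral_tsum_mul_of_summable_abs hκ hf hf_nonneg hf_le]
  simp_rw [← integral_of_le zero_le_one, integral_rpow_mul_one_sub_rpow (hpm _) hq]

noncomputable def besselJCoeff (ν : ℝ) (m : ℕ) : ℝ :=
  (-1 : ℝ) ^ m / (m.factorial * Gamma (m + ν + 1))

lemma besselJ_eq_tsum (ν x : ℝ) :
    besselJ ν x = ∑' m : ℕ, besselJCoeff ν m * (x / 2) ^ (2 * (m : ℝ) + ν) :=
  rfl

lemma abs_besselJCoeff_le {ν : ℝ} (hν : 0 ≤ ν) (m : ℕ) :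
    |besselJCoeff ν m| ≤ 1 / (Gamma (ν + 1) * m.factorial) := by
  have hGamma : Gamma (ν + 1) ≤ Gamma (m + ν + 1) := by
    rw [show (m : ℝ) + ν + 1 = ν + 1 + m by ring]
    exact Gamma_le_Gamma_add_nat (by linarith) m
  have hpos : 0 < Gamma (ν + 1) := Gamma_pos_of_pos (by linarith)
  rw [besselJCoeff, abs_div, abs_pow, abs_neg, abs_one, one_pow,
    abs_of_pos (by have := hpos.trans_le hGamma; positivity), mul_comm]
  gcongr

lemma rpow_two_mul_nat_add {y : ℝ} (hy : 0 < y) (m : ℕ) (ν : ℝ) :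
    y ^ (2 * (m : ℝ) + ν) = y ^ ν * (y ^ 2) ^ m := by
  rw [rpow_add hy, mul_comm, ← pow_mul, ← rpow_natCast]
  push_cast
  rfl

lemma summable_abs_besselJCoeff_mul_rpow {ν y : ℝ} (hν : 0 ≤ ν) (hy : 0 < y) :
    Summable fun m : ℕ => |besselJCoeff ν m * y ^ (2 * (m : ℝ) + ν)| := by
  refine ((summable_pow_div_factorial (y ^ 2)).mul_left (y ^ ν / Gamma (ν + 1))).of_nonneg_of_le
    (fun m => abs_nonneg _) fun m => ?_
  rw [abs_mul, abs_of_pos (rpow_pos_of_pos hy _), rpow_two_mul_nat_add hy]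
  calc |besselJCoeff ν m| * (y ^ ν * (y ^ 2) ^ m)
      ≤ 1 / (Gamma (ν + 1) * m.factorial) * (y ^ ν * (y ^ 2) ^ m) := by
        gcongr
        exact abs_besselJCoeff_le hν m
    _ = y ^ ν / Gamma (ν + 1) * ((y ^ 2) ^ m / m.factorial) := by ring

lemma besselJCoeff_mul_beta_eq {ν p q y : ℝ} (hν : -1 < ν) (hp : -1 < p) (hpq : 0 < p + q + 2)
    (hy : 0 < y) (m : ℕ) :
    besselJCoeff ν m * y ^ (2 * (m : ℝ) + ν) *
        (Gamma (p + 2 * m + 1) * Gamma (q + 1) / Gamma (p + 2 * m + q + 2)) =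
      y ^ ν * Gamma (q + 1) * Gamma (p + 1) / (Gamma (ν + 1) * Gamma (p + q + 2)) *
        (poch ((p + 1) / 2) m * poch ((p + 2) / 2) m /
          (poch (ν + 1) m * poch ((p + q + 2) / 2) m * poch ((p + q + 3) / 2) m *
            m.factorial) * (-y ^ 2) ^ m) := by
  have hν1 : 0 < ν + 1 := by linarith
  have := (Gamma_pos_of_pos hν1).ne'
  have := (Gamma_pos_of_pos hpq).ne'
  have := (poch_pos hν1 m).ne'
  have := (poch_pos (half_pos hpq) m).ne'
  have := (poch_pos (by linarith : 0 < (p + q + 3) / 2) m).ne'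
  rw [besselJCoeff, show (m : ℝ) + ν + 1 = ν + 1 + m by ring, Gamma_add_nat hν1,
    show p + 2 * (m : ℝ) + 1 = p + 1 + 2 * m by ring, Gamma_add_two_mul_nat (by linarith),
    show p + 2 * (m : ℝ) + q + 2 = p + q + 2 + 2 * m by ring, Gamma_add_two_mul_nat hpq,
    show (p + 1 + 1) / 2 = (p + 2) / 2 by ring, show (p + q + 2 + 1) / 2 = (p + q + 3) / 2 by ring,
    rpow_two_mul_nat_add hy, neg_pow (y ^ 2)]
  field_simp

lemma rpow_mul_one_sub_rpow_mul_besselJ {x : ℝ} (hx : 0 < x) {ω : ℝ} (hω : 0 ≤ ω) (a b ν : ℝ) :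
    x ^ a * (1 - x) ^ b * besselJ ν (ω * x) =
      ∑' m : ℕ, besselJCoeff ν m * (ω / 2) ^ (2 * (m : ℝ) + ν) *
        (x ^ (a + ν + 2 * m) * (1 - x) ^ b) := by
  rw [besselJ_eq_tsum, ← tsum_mul_left]
  refine tsum_congr fun m => ?_
  rw [show ω * x / 2 = ω / 2 * x by ring, mul_rpow (by positivity) hx.le,
    show a + ν + 2 * (m : ℝ) = a + (2 * m + ν) by ring, rpow_add hx a]
  ring

/-- for `a + ν > −1`, `b > −1`, `ν ≥ 0`, `ω > 0`,
`∫₀¹ x^a (1−x)^b J_ν(ωx) dx = Γ(b+1)Γ(a+ν+1) ω^ν / (2^ν Γ(ν+1) Γ(a+b+ν+2)) ·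
 ₂F₃((a+ν+1)/2, (a+ν+2)/2; ν+1, (a+b+ν+2)/2, (a+b+ν+3)/2; −ω²/4)`. -/
theorem bessel_moment_hypergeometric (a b ν ω : ℝ)
    (ha : -1 < a + ν) (hb : -1 < b) (hν : 0 ≤ ν) (hω : 0 < ω) :
    ∫ x in (0 : ℝ)..1, x ^ a * (1 - x) ^ b * besselJ ν (ω * x) =
      Real.Gamma (b + 1) * Real.Gamma (a + ν + 1) * ω ^ ν /
          (2 ^ ν * Real.Gamma (ν + 1) * Real.Gamma (a + b + ν + 2)) *
        hyp2F3 ((a + ν + 1) / 2) ((a + ν + 2) / 2) (ν + 1)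
          ((a + b + ν + 2) / 2) ((a + b + ν + 3) / 2) (-ω ^ 2 / 4) := by
  have hy : 0 < ω / 2 := half_pos hω
  rw [integral_of_le zero_le_one, setIntegral_congr_fun measurableSet_Ioc fun x hx =>
      rpow_mul_one_sub_rpow_mul_besselJ hx.1 hω.le a b ν,
    integral_tsum_mul_rpow_mul_one_sub_rpow (summable_abs_besselJCoeff_mul_rpow hν hy) ha hb,
    hyp2F3, ← tsum_mul_left]
  refine tsum_congr fun m => ?_
  rw [besselJCoeff_mul_beta_eq (by linarith) ha (by linarith) hy, div_rpow hω.le zero_le_two,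
    show -(ω / 2) ^ 2 = -ω ^ 2 / 4 by ring, show a + ν + b = a + b + ν by ring]
  ring
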